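/- arXiv:1502.02155 — 3 statements merged into one kernel-verified Lean document; each statement's English description precedes it below -/
import Mathlib

section
/- If a distribution over permutations of [n] satisfies the (p,q,δ)-block-independence property, then it satisfies the (p, δ + p²/q)-uniform-induced-ordering property; that is, for any p distinct items x_1,...,x_p, the probability that π(x_1) < π(x_2) < ... < π(x_p) is at least (1 - δ - p²/q)·(1/p!). -/
open scoped Classical

noncomputable section

/-- Probability of an event under a distribution `μ` on permutations of `Fin n`. -/
def prOf {n : ℕ} (μ : Equiv.Perm (Fin n) → ℝ) (E : Set (Equiv.Perm (Fin n))) : ℝ :=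
  ∑ π : Equiv.Perm (Fin n), if π ∈ E then μ π else 0

/-- `μ` is a probability distribution on permutations of `Fin n`. -/
def IsDist {n : ℕ} (μ : Equiv.Perm (Fin n) → ℝ) : Prop :=
  (∀ π, 0 ≤ μ π) ∧ ∑ π : Equiv.Perm (Fin n), μ π = 1

/-- `B` assigns positions `[n]` to `q` consecutive blocks of size between `⌊n/q⌋` and `⌈n/q⌉`. -/
def IsBlockPartition {n q : ℕ} (B : Fin n → Fin q) : Prop :=
  Monotone B ∧ ∀ j : Fin q,
    n / q ≤ (Finset.univ.filter (fun t => B t = j)).card ∧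
    (Finset.univ.filter (fun t => B t = j)).card ≤ (n + q - 1) / q

/-- The `(p,q,δ)`-block-independence property. -/
def BIP (n p q : ℕ) (δ : ℝ) (B : Fin n → Fin q) (μ : Equiv.Perm (Fin n) → ℝ) : Prop :=
  ∀ x : Fin p → Fin n, Function.Injective x → ∀ b : Fin p → Fin q,
    (1 - δ) * (1 / (q : ℝ)) ^ p ≤ prOf μ {π | ∀ i, B (π (x i)) = b i}

/-- The `(k,δ)`-uniform-induced-ordering property. -/
def UIOP (n k : ℕ) (δ : ℝ) (μ : Equiv.Perm (Fin n) → ℝ) : Prop :=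
  ∀ x : Fin k → Fin n, Function.Injective x →
    (1 - δ) / (Nat.factorial k : ℝ) ≤ prOf μ {π | StrictMono (fun i => π (x i))}

/-!
For a strictly increasing `b : Fin p ↪o Fin q`, the events "`π (x i)` lies in block `b i` for
all `i`" are pairwise disjoint, and each forces `π (x 0) < ⋯ < π (x (p-1))` because the blocks
are consecutive. Block independence bounds each of these `q.choose p` events below by
`(1 - δ) / q ^ p`, and `q.choose p / q ^ p ≥ (q - p) ^ p / (p! q ^ p) ≥ (1 - p² / q) / p!`
by Bernoulli's inequality.
-/

open Finset
open scoped Nat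

lemma card_fin_orderEmbedding (p q : ℕ) : Nat.card (Fin p ↪o Fin q) = q.choose p := by
  rw [Nat.card_congr Set.powersetCard.ofFinEmbEquiv, Set.powersetCard.card, Nat.card_fin]

lemma one_sub_sq_div_div_factorial_le_choose_div_pow {p q : ℕ} (hq : 0 < q) :
    (1 - (p : ℝ) ^ 2 / q) / p ! ≤ q.choose p / (q : ℝ) ^ p := by
  have hq' : (0 : ℝ) < q := by exact_mod_cast hq
  rcases le_or_gt p q with hpq | hqp
  · have hpq' : (p : ℝ) ≤ q := by exact_mod_cast hpq
    have hcast : ((q + 1 - p : ℕ) : ℝ) = q - p + 1 := by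
      rw [Nat.cast_sub (by omega)]; push_cast; ring
    calc (1 - (p : ℝ) ^ 2 / q) / p !
        ≤ (1 - (p : ℝ) / q) ^ p / p ! := by
          gcongr
          have : (p : ℝ) / q ≤ 1 := (div_le_one hq').mpr hpq'
          convert one_add_mul_le_pow (a := -((p : ℝ) / q)) (by linarith) p using 1 <;> ring
      _ = ((q - p : ℝ) ^ p / p !) / (q : ℝ) ^ p := by
          rw [one_sub_div hq'.ne', div_pow]; ring
      _ ≤ (((q + 1 - p : ℕ) : ℝ) ^ p / p !) / (q : ℝ) ^ p := by
          gcongr; linarith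
      _ ≤ q.choose p / (q : ℝ) ^ p := by gcongr; exact Nat.pow_le_choose p q
  · have hsq : (q : ℝ) ≤ (p : ℝ) ^ 2 := by
      exact_mod_cast hqp.le.trans (Nat.le_self_pow two_ne_zero p)
    rw [Nat.choose_eq_zero_of_lt hqp, Nat.cast_zero, zero_div]
    exact div_nonpos_of_nonpos_of_nonneg (by rwa [sub_nonpos, one_le_div hq']) (by positivity)

section
variable {n : ℕ} (μ : Equiv.Perm (Fin n) → ℝ)

lemma prOf_eq_sum_filter (E : Set (Equiv.Perm (Fin n))) :
    prOf μ E = ∑ π ∈ univ.filter (· ∈ E), μ π :=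
  (sum_filter _ _).symm

lemma prOf_nonneg (hμ : ∀ π, 0 ≤ μ π) (E : Set (Equiv.Perm (Fin n))) : 0 ≤ prOf μ E := by
  rw [prOf_eq_sum_filter]; exact sum_nonneg fun π _ => hμ π

lemma sum_prOf_le_prOf {ι : Type*} (s : Finset ι) {E : ι → Set (Equiv.Perm (Fin n))}
    {F : Set (Equiv.Perm (Fin n))} (hμ : ∀ π, 0 ≤ μ π)
    (hdisj : (s : Set ι).PairwiseDisjoint E) (hEF : ∀ i ∈ s, E i ⊆ F) :
    ∑ i ∈ s, prOf μ (E i) ≤ prOf μ F := by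
  have hdisj' : (s : Set ι).PairwiseDisjoint fun i => univ.filter (· ∈ E i) :=
    fun i hi j hj hij =>
      disjoint_filter.mpr fun _ _ hπi hπj => Set.disjoint_left.mp (hdisj hi hj hij) hπi hπj
  simp only [prOf_eq_sum_filter, ← sum_biUnion hdisj']
  refine sum_le_sum_of_subset_of_nonneg (fun π hπ => ?_) fun π _ _ => hμ π
  obtain ⟨i, hi, hπi⟩ := mem_biUnion.mp hπ
  simp only [mem_filter, mem_univ, true_and] at hπi ⊢
  exact hEF i hi hπi

end

section
variable {n p q : ℕ}

def blockEvent (B : Fin n → Fin q) (x : Fin p → Fin n) (b : Fin p → Fin q) :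
    Set (Equiv.Perm (Fin n)) :=
  {π | ∀ i, B (π (x i)) = b i}

lemma pairwiseDisjoint_blockEvent (B : Fin n → Fin q) (x : Fin p → Fin n)
    (s : Set (Fin p ↪o Fin q)) : s.PairwiseDisjoint fun b => blockEvent B x b :=
  fun _ _ _ _ hbc => Set.disjoint_left.mpr fun _ hb hc =>
    hbc (DFunLike.ext _ _ fun i => (hb i).symm.trans (hc i))

lemma blockEvent_subset_strictMono {B : Fin n → Fin q} (hB : Monotone B) (x : Fin p → Fin n)
    (b : Fin p ↪o Fin q) : blockEvent B x b ⊆ {π | StrictMono fun i => π (x i)} :=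
  fun _ hπ i j hij => hB.reflect_lt (by rw [hπ i, hπ j]; exact b.strictMono hij)

end

theorem bip_implies_uiop_general (n p q : ℕ) (δ : ℝ) (B : Fin n → Fin q)
    (μ : Equiv.Perm (Fin n) → ℝ) (hμ : IsDist μ) (hB : IsBlockPartition B)
    (hq : 0 < q) (hδ : 0 ≤ δ)
    (h : BIP n p q δ B μ) :
    UIOP n p (δ + (p : ℝ) ^ 2 / q) μ := by
  intro x hx
  have hsq : (0 : ℝ) ≤ (p : ℝ) ^ 2 / q := by positivity
  rcases le_or_gt δ 1 with hδ1 | hδ1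
  · calc (1 - (δ + (p : ℝ) ^ 2 / q)) / p !
        ≤ (1 - δ) * ((1 - (p : ℝ) ^ 2 / q) / p !) := by
          rw [mul_div_assoc']; gcongr; nlinarith [mul_nonneg hδ hsq]
      _ ≤ (1 - δ) * (q.choose p / (q : ℝ) ^ p) :=
          mul_le_mul_of_nonneg_left (one_sub_sq_div_div_factorial_le_choose_div_pow hq)
            (by linarith)
      _ = ∑ _b : Fin p ↪o Fin q, (1 - δ) * (1 / (q : ℝ)) ^ p := by
          rw [sum_const, card_univ, ← Nat.card_eq_fintype_card, card_fin_orderEmbedding,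
            nsmul_eq_mul]
          ring
      _ ≤ ∑ b : Fin p ↪o Fin q, prOf μ (blockEvent B x b) :=
          sum_le_sum fun b _ => h x hx b
      _ ≤ prOf μ {π | StrictMono fun i => π (x i)} :=
          sum_prOf_le_prOf μ univ hμ.1 (pairwiseDisjoint_blockEvent B x _)
            fun b _ => blockEvent_subset_strictMono hB.1 x b
  · have hneg : 1 - (δ + (p : ℝ) ^ 2 / q) ≤ 0 := by linarith
    exact (div_nonpos_of_nonpos_of_nonneg hneg (by positivity)).trans (prOf_nonneg μ hμ.1 _)

/-- `(p,q,δ)`-block-independence implies the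
`(p, δ + p²/q)`-uniform-induced-ordering property. -/
theorem bip_implies_uiop (n p q : ℕ) (δ : ℝ) (B : Fin n → Fin q)
    (μ : Equiv.Perm (Fin n) → ℝ) (hμ : IsDist μ) (hB : IsBlockPartition B)
    (hq : 0 < q) (hqn : q ≤ n) (hδ : 0 ≤ δ)
    (h : BIP n p q δ B μ) :
    UIOP n p (δ + (p : ℝ) ^ 2 / q) μ :=
  bip_implies_uiop_general n p q δ B μ hμ hB hq hδ h
end
end

section
/- Fix k ≥ 2, δ ∈ (0,1), and ξ ≥ (2(k+1)!/δ²)·ln n. If S is a multiset of ξ permutations of [n] each drawn independently and uniformly at random, then with probability at least 1 - 1/n, the uniform distribution over S satisfies the (k,δ)-uniform-induced-ordering property. -/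
/-!
For a fixed injective `k`-tuple `x`, exactly one in `k!` permutations orders `x` increasingly:
composing on the right with the permutations of the entries of `x` splits `Perm (Fin n)` into
classes of size `k!`, each containing exactly one such permutation. Hence the number of samples
of `S` that order `x` is a sum of `ξ` independent Bernoulli(`1/k!`) variables, and the
exponential-moment bound with parameter `δ` (using `exp (-δ) ≤ 1 - δ + δ²/2`) shows that it
falls below `(1 - δ) ξ / k!` for at most a fraction `exp (-δ² ξ / (2 k!)) ≤ n^-(k+1)` of all
`S`. A union bound over the at most `n^k` tuples `x` leaves a failure fraction of at most `1/n`.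
-/

open scoped Classical

noncomputable section

/-- The uniform (empirical) distribution over a multiset of `ξ` permutations,
given as a function `S : Fin ξ → Equiv.Perm (Fin n)`. -/
def empDist {n ξ : ℕ} (S : Fin ξ → Equiv.Perm (Fin n)) : Equiv.Perm (Fin n) → ℝ :=
  fun π => ((Finset.univ.filter (fun i => S i = π)).card : ℝ) / ξ

open Finset Equiv
open scoped Nat

theorem Real.exp_neg_le_one_sub_add_sq_div_two {x : ℝ} (hx : 0 ≤ x) :
    Real.exp (-x) ≤ 1 - x + x ^ 2 / 2 := by
  let f : ℝ → ℝ := fun y => 1 - y + y ^ 2 / 2 - Real.exp (-y)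
  have hf : ∀ y, HasDerivAt f (-1 + y + Real.exp (-y)) y := fun y =>
    ((((hasDerivAt_id y).const_sub 1).add ((hasDerivAt_pow 2 y).div_const 2)).sub
      (hasDerivAt_id y).neg.exp).congr_deriv (by simp)
  have hmono : Monotone f := monotone_of_deriv_nonneg (fun y => (hf y).differentiableAt)
    fun y => by rw [(hf y).deriv]; linarith [Real.add_one_le_exp (-y)]
  simpa [f] using hmono hx

theorem Tuple.strictMono_comp_iff_eq_sort {β : Type*} [LinearOrder β] {k : ℕ} {f : Fin k → β}
    (hf : Function.Injective f) {σ : Perm (Fin k)} :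
    StrictMono (f ∘ σ) ↔ σ = Tuple.sort f := by
  rw [Tuple.eq_sort_iff]
  refine ⟨fun h => ⟨h.monotone, fun i j hij hfij => absurd (σ.injective (hf hfij)) hij.ne⟩,
    fun h => h.1.strictMono_of_injective (hf.comp σ.injective)⟩

theorem card_filter_strictMono_comp_mul_factorial {α : Type*} [Fintype α] [LinearOrder α]
    {k : ℕ} (x : Fin k ↪ α) :
    #{π : Perm α | StrictMono (fun i => π (x i))} * k ! = (Fintype.card α)! := by
  let e := Perm.viaEmbeddingHom x
  have he (ρ σ i) : (ρ * e σ) (x i) = ρ (x (σ i)) := by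
    simp [e, Perm.viaEmbeddingHom_apply, Perm.viaEmbedding_apply]
  let sortOf : Perm α → Perm (Fin k) := fun ρ => Tuple.sort (fun i => ρ (x i))
  have hsort (ρ σ) : StrictMono (fun i => (ρ * e σ) (x i)) ↔ σ = sortOf ρ := by
    simp only [he]
    exact Tuple.strictMono_comp_iff_eq_sort (ρ.injective.comp x.injective)
  let E : Perm α ≃ {π : Perm α // StrictMono (fun i => π (x i))} × Perm (Fin k) :=
    { toFun ρ := (⟨ρ * e (sortOf ρ), (hsort ρ _).2 rfl⟩, sortOf ρ)
      invFun p := p.1 * e p.2⁻¹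
      left_inv ρ := by simp
      right_inv := by
        rintro ⟨⟨π, hπ⟩, σ⟩
        have hσ : σ = sortOf (π * e σ⁻¹) :=
          (hsort _ σ).1 (by simpa [mul_assoc, ← map_mul])
        refine Prod.ext (Subtype.ext ?_) hσ.symm
        change π * e σ⁻¹ * e (sortOf (π * e σ⁻¹)) = π
        rw [← hσ, mul_assoc, ← map_mul, inv_mul_cancel, map_one, mul_one] }
  simpa [Fintype.card_subtype, Fintype.card_perm] using (Fintype.card_congr E).symm

section LowerTail

variable {Ω : Type*} [Fintype Ω]

theorem card_filter_lt_le_sum_exp {β : Type*} [Fintype β] (f : β → ℝ) (a : ℝ) {t : ℝ}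
    (ht : 0 ≤ t) : (#{b | f b < a} : ℝ) ≤ ∑ b, Real.exp (t * (a - f b)) := by
  rw [card_filter, Nat.cast_sum]
  refine sum_le_sum fun b _ => ?_
  split_ifs with h
  · simpa using Real.one_le_exp (mul_nonneg ht (sub_nonneg.2 h.le))
  · simpa using (Real.exp_pos _).le

theorem sum_exp_neg_mul_card_filter_mem (A : Finset Ω) (t : ℝ) (ξ : ℕ) :
    ∑ S : Fin ξ → Ω, Real.exp (-t * #{i | S i ∈ A}) =
      (Fintype.card Ω + #A * (Real.exp (-t) - 1)) ^ ξ := by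
  have hprod (S : Fin ξ → Ω) : Real.exp (-t * #{i | S i ∈ A}) =
      ∏ i, (1 + if S i ∈ A then Real.exp (-t) - 1 else 0) := by
    simp only [add_ite, add_sub_cancel, add_zero]
    rw [prod_ite, prod_const, prod_const_one, mul_one, ← Real.exp_nat_mul, mul_comm]
  rw [Fintype.sum_congr _ _ hprod,
    ← Fintype.sum_pow (fun q => 1 + if q ∈ A then Real.exp (-t) - 1 else 0)]
  simp [sum_add_distrib, mul_sub]

theorem card_filter_card_filter_mem_lt_le [Nonempty Ω] (A : Finset Ω) {δ : ℝ} (hδ : 0 ≤ δ)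
    (ξ : ℕ) {p : ℝ} (hp : (#A : ℝ) = p * Fintype.card Ω) :
    (#{S : Fin ξ → Ω | (#{i | S i ∈ A} : ℝ) < (1 - δ) * p * ξ} : ℝ) ≤
      Real.exp (-(δ ^ 2 * p * ξ / 2)) * Fintype.card Ω ^ ξ := by
  have hN : (0 : ℝ) < Fintype.card Ω := by exact_mod_cast Fintype.card_pos
  have hp0 : 0 ≤ p := nonneg_of_mul_nonneg_left (hp ▸ Nat.cast_nonneg #A) hN
  have hp1 : p ≤ 1 := by
    have : (#A : ℝ) ≤ Fintype.card Ω := by exact_mod_cast card_le_univ A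
    nlinarith
  set N : ℝ := (Fintype.card Ω : ℝ)
  have hmgf : N + #A * (Real.exp (-δ) - 1) ≤ N * Real.exp (p * (Real.exp (-δ) - 1)) := by
    rw [hp]
    nlinarith [Real.add_one_le_exp (p * (Real.exp (-δ) - 1))]
  have hquad := Real.exp_neg_le_one_sub_add_sq_div_two hδ
  calc (#{S : Fin ξ → Ω | (#{i | S i ∈ A} : ℝ) < (1 - δ) * p * ξ} : ℝ)
      ≤ ∑ S : Fin ξ → Ω, Real.exp (δ * ((1 - δ) * p * ξ - #{i | S i ∈ A})) :=
        card_filter_lt_le_sum_exp _ _ hδ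
    _ = Real.exp (δ * ((1 - δ) * p * ξ)) * (N + #A * (Real.exp (-δ) - 1)) ^ ξ := by
        rw [← sum_exp_neg_mul_card_filter_mem, mul_sum]
        simp only [← Real.exp_add]
        ring_nf
    _ ≤ Real.exp (δ * ((1 - δ) * p * ξ)) * (N * Real.exp (p * (Real.exp (-δ) - 1))) ^ ξ := by
        gcongr
        rw [hp]
        nlinarith [Real.exp_pos (-δ)]
    _ = Real.exp (δ * ((1 - δ) * p * ξ) + ξ * (p * (Real.exp (-δ) - 1))) * N ^ ξ := by
        rw [mul_pow, ← Real.exp_nat_mul, Real.exp_add]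
        ring
    _ ≤ Real.exp (-(δ ^ 2 * p * ξ / 2)) * N ^ ξ := by
        gcongr
        nlinarith [mul_nonneg (mul_nonneg (Nat.cast_nonneg ξ) hp0)
          (sub_nonneg.2 hquad)]

end LowerTail

theorem prOf_empDist {n ξ : ℕ} (S : Fin ξ → Perm (Fin n)) (E : Set (Perm (Fin n))) :
    prOf (empDist S) E = #{i | S i ∈ E} / ξ := by
  rw [card_eq_sum_card_fiberwise (f := S) (t := {π | π ∈ E}) (fun i hi => by simpa using hi)]
  simp only [prOf, empDist, ← sum_filter, Nat.cast_sum, sum_div, filter_filter]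
  refine sum_congr rfl fun π hπ => ?_
  simp only [mem_filter, mem_univ, true_and] at hπ
  congr 3
  exact filter_congr fun i _ => ⟨fun h => ⟨h ▸ hπ, h⟩, And.right⟩

theorem uiop_empDist_iff {n k ξ : ℕ} (hξ : 0 < ξ) (δ : ℝ) (S : Fin ξ → Perm (Fin n)) :
    UIOP n k δ (empDist S) ↔
      ∀ x : Fin k ↪ Fin n, (1 - δ) / k ! * ξ ≤ #{i | StrictMono (fun j => S i (x j))} := by
  simp only [UIOP, prOf_empDist, le_div_iff₀ (Nat.cast_pos.2 hξ : (0 : ℝ) < ξ),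
    Set.mem_ofPred_eq]
  exact ⟨fun h x => h x x.injective, fun h x hx => h ⟨x, hx⟩⟩

theorem card_filter_card_strictMono_lt_le {n k : ℕ} (ξ : ℕ) (x : Fin k ↪ Fin n) {δ : ℝ}
    (hδ : 0 ≤ δ) :
    (#{S : Fin ξ → Perm (Fin n) |
        (#{i | StrictMono (fun j => S i (x j))} : ℝ) < (1 - δ) / k ! * ξ} : ℝ) ≤
      Real.exp (-(δ ^ 2 * ξ / (2 * k !))) * (n ! : ℝ) ^ ξ := by
  have hA : (#{π : Perm (Fin n) | StrictMono (fun j => π (x j))} : ℝ) =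
      1 / k ! * Fintype.card (Perm (Fin n)) := by
    have h := card_filter_strictMono_comp_mul_factorial x
    rw [Fintype.card_perm, Fintype.card_fin] at *
    field_simp
    exact_mod_cast h
  have := card_filter_card_filter_mem_lt_le _ hδ ξ hA
  rw [show (1 - δ) * (1 / k ! : ℝ) * ξ = (1 - δ) / k ! * ξ by ring,
    show δ ^ 2 * (1 / k ! : ℝ) * ξ / 2 = δ ^ 2 * ξ / (2 * k !) by ring] at this
  simpa only [Fintype.card_perm, Fintype.card_fin, mem_filter, mem_univ, true_and] using this

theorem card_filter_not_uiop_empDist_le {n k ξ : ℕ} (hξ : 0 < ξ) {δ : ℝ} (hδ : 0 ≤ δ) :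
    (#{S : Fin ξ → Perm (Fin n) | ¬UIOP n k δ (empDist S)} : ℝ) ≤
      n ^ k * (Real.exp (-(δ ^ 2 * ξ / (2 * k !))) * (n ! : ℝ) ^ ξ) := by
  let bad (x : Fin k ↪ Fin n) : Finset (Fin ξ → Perm (Fin n)) :=
    {S | (#{i | StrictMono (fun j => S i (x j))} : ℝ) < (1 - δ) / k ! * ξ}
  have hsub : ({S | ¬UIOP n k δ (empDist S)} : Finset (Fin ξ → Perm (Fin n))) ⊆
      univ.biUnion bad :=
    fun S hS => by simpa [bad, uiop_empDist_iff hξ] using hS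
  calc (#{S : Fin ξ → Perm (Fin n) | ¬UIOP n k δ (empDist S)} : ℝ)
      ≤ ∑ x, (#(bad x) : ℝ) := by exact_mod_cast (card_le_card hsub).trans card_biUnion_le
    _ ≤ n.descFactorial k * (Real.exp (-(δ ^ 2 * ξ / (2 * k !))) * (n ! : ℝ) ^ ξ) := by
        simpa [Fintype.card_embedding_eq] using
          sum_le_card_nsmul univ _ _ fun x _ => card_filter_card_strictMono_lt_le ξ x hδ
    _ ≤ n ^ k * (Real.exp (-(δ ^ 2 * ξ / (2 * k !))) * (n ! : ℝ) ^ ξ) := by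
        gcongr
        exact_mod_cast n.descFactorial_le_pow k

theorem exp_neg_sq_mul_div_le_inv_pow {n k ξ : ℕ} (hn : 0 < n) {δ : ℝ} (hδ : 0 < δ)
    (hξ : 2 * ((k + 1)! / δ ^ 2) * Real.log n ≤ ξ) :
    Real.exp (-(δ ^ 2 * ξ / (2 * k !))) ≤ 1 / n ^ (k + 1) := by
  have hlog : (k + 1) * Real.log n ≤ δ ^ 2 * ξ / (2 * k !) := by
    rw [le_div_iff₀ (by positivity)]
    calc (k + 1) * Real.log n * (2 * k !)
        = δ ^ 2 * (2 * ((k + 1)! / δ ^ 2) * Real.log n) := by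
          push_cast [Nat.factorial_succ]
          field_simp
      _ ≤ δ ^ 2 * ξ := by gcongr
  calc Real.exp (-(δ ^ 2 * ξ / (2 * k !))) ≤ Real.exp (-((k + 1) * Real.log n)) := by gcongr
    _ = 1 / n ^ (k + 1) := by
        rw [Real.exp_neg, ← Nat.cast_succ, Real.exp_nat_mul, Real.exp_log (Nat.cast_pos.2 hn),
          one_div]

theorem random_multiset_uiop_general (n k ξ : ℕ) (hn : 0 < n) (δ : ℝ)
    (hδ0 : 0 < δ)
    (hξ : 2 * ((Nat.factorial (k + 1) : ℝ) / δ ^ 2) * Real.log n ≤ ξ) :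
    (1 - 1 / (n : ℝ)) * (Fintype.card (Fin ξ → Equiv.Perm (Fin n)) : ℝ) ≤
      (Nat.card {S : Fin ξ → Equiv.Perm (Fin n) // UIOP n k δ (empDist S)} : ℝ) := by
  obtain rfl | hn2 : n = 1 ∨ 2 ≤ n := by omega
  · simp
  have hξpos : 0 < ξ := by
    have hlog : 0 < Real.log n := Real.log_pos (by exact_mod_cast hn2)
    exact Nat.cast_pos.1 (hξ.trans_lt' (by positivity))
  have hbad : (#{S : Fin ξ → Perm (Fin n) | ¬UIOP n k δ (empDist S)} : ℝ) ≤
      1 / n * (n ! : ℝ) ^ ξ :=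
    calc _ ≤ n ^ k * (Real.exp (-(δ ^ 2 * ξ / (2 * k !))) * (n ! : ℝ) ^ ξ) :=
          card_filter_not_uiop_empDist_le hξpos hδ0.le
      _ ≤ n ^ k * (1 / n ^ (k + 1) * (n ! : ℝ) ^ ξ) := by
          gcongr; exact exp_neg_sq_mul_div_le_inv_pow hn hδ0 hξ
      _ = 1 / n * (n ! : ℝ) ^ ξ := by field_simp; ring
  have htotal : (Fintype.card (Fin ξ → Perm (Fin n)) : ℝ) =
      #{S : Fin ξ → Perm (Fin n) | UIOP n k δ (empDist S)} +
        #{S : Fin ξ → Perm (Fin n) | ¬UIOP n k δ (empDist S)} := by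
    rw [← Nat.cast_add, card_filter_add_card_filter_not, card_univ]
  have hcard : (Fintype.card (Fin ξ → Perm (Fin n)) : ℝ) = (n ! : ℝ) ^ ξ := by
    simp [Fintype.card_perm]
  rw [Nat.card_eq_fintype_card, Fintype.card_subtype]
  rw [← hcard] at hbad
  linarith

/-- fix `k ≥ 2`, `δ ∈ (0,1)` and `ξ ≥ (2(k+1)!/δ²)·ln n`.  If `S` is a multiset
of `ξ` independent uniformly random permutations of `[n]`, then with probability at least
`1 - 1/n` the uniform distribution over `S` satisfies the `(k,δ)`-uniform-induced-ordering
property.  (The probability is expressed as a fraction of the `(n!)^ξ` equally likely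
tuples `S`.) -/
theorem random_multiset_uiop (n k ξ : ℕ) (hn : 0 < n) (hk : 2 ≤ k) (δ : ℝ)
    (hδ0 : 0 < δ) (hδ1 : δ < 1)
    (hξ : 2 * ((Nat.factorial (k + 1) : ℝ) / δ ^ 2) * Real.log n ≤ ξ) :
    (1 - 1 / (n : ℝ)) * (Fintype.card (Fin ξ → Equiv.Perm (Fin n)) : ℝ) ≤
      (Nat.card {S : Fin ξ → Equiv.Perm (Fin n) // UIOP n k δ (empDist S)} : ℝ) :=
  random_multiset_uiop_general n k ξ hn δ hδ0 hξ
end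
end

section
/- For any k permutations π_1,...,π_k of [n], there exists a sequence (x_1,...,x_s) of distinct elements with s > (log₂ n)/(k+1) that is semitone with respect to every π_i. -/
noncomputable section

/-- `(x 0, …, x (s-1))` is a semitone sequence with respect to the permutation `π`:
for every `t`, `π (x t)` is either the minimum or the maximum of `π (x i)` over `i ≤ t`.
(This is equivalent to the recursive definition: the last element maps to the min or the
max of the sequence and the prefix is semitone.) -/
def SemitoneSeq {n s : ℕ} (π : Equiv.Perm (Fin n)) (x : Fin s → Fin n) : Prop :=
  ∀ t : Fin s,
    (∀ i : Fin s, i ≤ t → π (x t) ≤ π (x i)) ∨ (∀ i : Fin s, i ≤ t → π (x i) ≤ π (x t))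

lemma semitone_aux (n k : ℕ) (πs : Fin k → Equiv.Perm (Fin n)) (S : Finset (Fin n)) :
    ∃ (s : ℕ) (x : Fin s → Fin n), Function.Injective x ∧ (∀ j, x j ∈ S) ∧
      (∀ i, SemitoneSeq (πs i) x) ∧
      (S.Nonempty → 2 ^ (k + 1) * S.card ≤ 2 ^ ((k + 1) * s)) := by
  induction S using Finset.strongInduction with
  | _ S ih =>
  rcases S.eq_empty_or_nonempty with rfl | ⟨p, hp⟩
  · exact ⟨0, Fin.elim0, fun a => a.elim0, fun j => j.elim0, fun i t => t.elim0,
      fun h => absurd rfl h.ne_empty⟩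
  · set f : Fin n → (Fin k → Bool) := fun y i => decide (πs i y < πs i p) with hf
    obtain ⟨b, -, hb⟩ := Finset.exists_max_image (Finset.univ : Finset (Fin k → Bool))
      (fun c => ((S.erase p).filter (fun y => f y = c)).card) ⟨f p, Finset.mem_univ _⟩
    set B : Finset (Fin n) := (S.erase p).filter (fun y => f y = b) with hB
    have hBsub : B ⊆ S := (Finset.filter_subset _ _).trans (Finset.erase_subset _ _)
    have hpB : p ∉ B := fun h => (Finset.mem_erase.1 (Finset.mem_filter.1 h).1).1 rfl
    have hBS : B ⊂ S := Finset.ssubset_iff_of_subset hBsub |>.2 ⟨p, hp, hpB⟩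
    have hcard : (S.erase p).card ≤ 2 ^ k * B.card := by
      have h1 : (S.erase p).card = ∑ c : Fin k → Bool,
          ((S.erase p).filter (fun y => f y = c)).card :=
        Finset.card_eq_sum_card_fiberwise (fun y _ => Finset.mem_univ (f y))
      have h2 : ∑ c : Fin k → Bool, ((S.erase p).filter (fun y => f y = c)).card
          ≤ (Finset.univ : Finset (Fin k → Bool)).card • B.card :=
        Finset.sum_le_card_nsmul _ _ _ (fun c hc => hb c hc)
      have h3 : (Finset.univ : Finset (Fin k → Bool)).card = 2 ^ k := by
        simp [Finset.card_univ]
      rw [h1]; simpa [h3] using h2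
    obtain ⟨s', x', hinj', hmem', hsem', hcard'⟩ := ih B hBS
    have hside : ∀ i : Fin k, (∀ y ∈ B, πs i y < πs i p) ∨ (∀ y ∈ B, πs i p < πs i y) := by
      intro i
      have hne : ∀ y ∈ B, πs i y ≠ πs i p := by
        intro y hy h
        exact (Finset.mem_erase.1 (Finset.mem_filter.1 hy).1).1 ((πs i).injective h)
      cases hbi : b i with
      | true =>
        left; intro y hy
        have hfy : f y = b := (Finset.mem_filter.1 hy).2
        have := congrFun hfy i
        rw [hbi] at this
        exact of_decide_eq_true this
      | false =>
        right; intro y hy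
        have hfy : f y = b := (Finset.mem_filter.1 hy).2
        have := congrFun hfy i
        rw [hbi] at this
        have hnlt : ¬ (πs i y < πs i p) := of_decide_eq_false this
        exact lt_of_le_of_ne (not_lt.1 hnlt) (Ne.symm (hne y hy))
    refine ⟨s' + 1, Fin.snoc x' p, ?_, ?_, ?_, ?_⟩
    · intro a c h
      induction a using Fin.lastCases with
      | last =>
        induction c using Fin.lastCases with
        | last => rfl
        | cast c =>
          rw [Fin.snoc_last, Fin.snoc_castSucc] at h
          exact absurd (h ▸ hmem' c) hpB
      | cast a =>
        induction c using Fin.lastCases with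
        | last =>
          rw [Fin.snoc_last, Fin.snoc_castSucc] at h
          exact absurd (h ▸ hmem' a) hpB
        | cast c =>
          rw [Fin.snoc_castSucc, Fin.snoc_castSucc] at h
          exact congrArg Fin.castSucc (hinj' h)
    · intro j
      induction j using Fin.lastCases with
      | last => rw [Fin.snoc_last]; exact hp
      | cast j => rw [Fin.snoc_castSucc]; exact hBsub (hmem' j)
    · intro i t
      induction t using Fin.lastCases with
      | last =>
        rcases hside i with h | h
        · right; intro j _
          induction j using Fin.lastCases with
          | last => exact le_refl _
          | cast j =>
            rw [Fin.snoc_last, Fin.snoc_castSucc]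
            exact (h _ (hmem' j)).le
        · left; intro j _
          induction j using Fin.lastCases with
          | last => exact le_refl _
          | cast j =>
            rw [Fin.snoc_last, Fin.snoc_castSucc]
            exact (h _ (hmem' j)).le
      | cast t =>
        rcases hsem' i t with h | h
        · left; intro j hj
          induction j using Fin.lastCases with
          | last => exact absurd hj (not_le.2 (Fin.castSucc_lt_last t))
          | cast j =>
            rw [Fin.snoc_castSucc, Fin.snoc_castSucc]
            exact h j (Fin.castSucc_le_castSucc_iff.1 hj)
        · right; intro j hj
          induction j using Fin.lastCases with
          | last => exact absurd hj (not_le.2 (Fin.castSucc_lt_last t))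
          | cast j =>
            rw [Fin.snoc_castSucc, Fin.snoc_castSucc]
            exact h j (Fin.castSucc_le_castSucc_iff.1 hj)
    · intro _
      have hScard : S.card = (S.erase p).card + 1 := (Finset.card_erase_add_one hp).symm
      rcases B.eq_empty_or_nonempty with hBe | hBne
      · have h1 : S.card = 1 := by
          rw [hScard]
          have : (S.erase p).card = 0 := by
            have := hcard; rw [hBe] at this; simpa using this
          omega
        rw [h1, mul_one]
        exact Nat.pow_le_pow_right (by norm_num) (by nlinarith)
      · have hc' : 2 ^ (k + 1) * B.card ≤ 2 ^ ((k + 1) * s') := hcard' hBne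
        have hs1 : 1 ≤ s' := by
          by_contra h
          have : s' = 0 := by omega
          rw [this] at hc'
          have hB1 : 1 ≤ B.card := hBne.card_pos
          simp at hc'
          nlinarith [hB1, Nat.one_lt_two_pow_iff (n := k + 1) |>.2 (by omega)]
        have key : 2 ^ ((k + 1) * (s' + 1)) = 2 ^ ((k + 1) * s') * 2 ^ (k + 1) := by
          rw [← pow_add]; ring_nf
        rw [key]
        have h2 : 2 ^ (k + 1) ≤ 2 ^ ((k + 1) * s') :=
          Nat.pow_le_pow_right (by norm_num) (by nlinarith)
        have h3 : S.card ≤ 2 ^ k * B.card + 1 := by omega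
        calc 2 ^ (k + 1) * S.card ≤ 2 ^ (k + 1) * (2 ^ k * B.card + 1) := by
              exact Nat.mul_le_mul_left _ h3
          _ = 2 ^ k * (2 ^ (k + 1) * B.card) + 2 ^ (k + 1) := by ring
          _ ≤ 2 ^ k * 2 ^ ((k + 1) * s') + 2 ^ ((k + 1) * s') := by
              exact Nat.add_le_add (Nat.mul_le_mul_left _ hc') h2
          _ = 2 ^ ((k + 1) * s') * (2 ^ k + 1) := by ring
          _ ≤ 2 ^ ((k + 1) * s') * 2 ^ (k + 1) := by
              refine Nat.mul_le_mul_left _ ?_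
              rw [pow_succ]
              nlinarith [Nat.one_le_two_pow (n := k)]


/-- for any `k` permutations of `[n]` there is a sequence of distinct
elements of length `s > (log₂ n)/(k+1)` that is semitone with respect to all of them. -/
theorem exists_common_semitone (n k : ℕ) (hn : 0 < n)
    (πs : Fin k → Equiv.Perm (Fin n)) :
    ∃ (s : ℕ) (x : Fin s → Fin n), Function.Injective x ∧
      (∀ i, SemitoneSeq (πs i) x) ∧ Real.logb 2 n / ((k : ℝ) + 1) < s := by
  obtain ⟨s, x, hinj, hmem, hsem, hcard⟩ := semitone_aux n k πs Finset.univ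
  refine ⟨s, x, hinj, hsem, ?_⟩
  have huniv : (Finset.univ : Finset (Fin n)).Nonempty := ⟨⟨0, hn⟩, Finset.mem_univ _⟩
  have h1 : 2 ^ (k + 1) * n ≤ 2 ^ ((k + 1) * s) := by
    simpa [Finset.card_univ] using hcard huniv
  have h2 : n < 2 ^ ((k + 1) * s) := by
    have h22 : 2 ≤ 2 ^ (k + 1) := Nat.one_lt_two_pow_iff (n := k + 1) |>.2 (by omega)
    nlinarith
  have h3 : (n : ℝ) < (2 : ℝ) ^ ((k + 1) * s) := by
    exact_mod_cast h2
  have h4 : Real.logb 2 n < ((k + 1) * s : ℕ) := by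
    calc Real.logb 2 n < Real.logb 2 ((2 : ℝ) ^ ((k + 1) * s)) :=
          Real.logb_lt_logb (b := 2) (by norm_num) (by exact_mod_cast hn) h3
      _ = ((k + 1) * s : ℕ) := by
          rw [Real.logb_pow, Real.logb_self_eq_one (by norm_num)]
          simp
  rw [div_lt_iff₀ (by positivity)]
  push_cast at h4 ⊢
  nlinarith
end
end
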